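/- Pointwise Poisson bracket identity and lower bound: let μ ∈ (0,2), K > 0, let V₁ ∈ C¹(ℝ^d \ {0}) be real, and set f₀(x) = (K⟨x⟩^{-μ})^{1/2}, h₁(x,ξ) = |ξ|² + V₁(x), b(x,ξ) = (ξ·x)/(f₀(x)⟨x⟩), W(x) = -2V₁(x) - x·∇V₁(x). Then the Poisson bracket {h₁, b} = ∇_ξh₁·∇_x b - ∇_x h₁·∇_ξ b satisfies {h₁, b}(x,ξ) = ⟨x⟩^{μ/2-1}(W(x) - (2-μ)K⟨x⟩^{-μ} b(x,ξ)² + 2h₁(x,ξ))/√K. Moreover, if in addition W(x) ≥ ε₁ε̃₁⟨x⟩^{-μ} and K = ε₁ε̃₁/(2-μ), then {h₁,b}(x,ξ) ≥ (2-μ)√K ⟨x⟩^{-μ/2-1}(1 - b(x,ξ)²) + 2⟨x⟩^{μ/2-1} h₁(x,ξ)/√K. -/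

import Mathlib

noncomputable section

variable {d : ℕ}

/-- The Japanese bracket `⟨x⟩ = (|x|² + 1)^{1/2}` on `ℝ^d`. -/
def jap (x : EuclideanSpace ℝ (Fin d)) : ℝ := Real.sqrt (‖x‖ ^ 2 + 1)

/-- The Poisson bracket `{p, q} = ∇_ξ p · ∇_x q - ∇_x p · ∇_ξ q` of two functions
`p q : ℝ^d × ℝ^d → ℝ` on phase space (written in curried form: `p x ξ`). -/
def pb (p q : EuclideanSpace ℝ (Fin d) → EuclideanSpace ℝ (Fin d) → ℝ)
    (x ξ : EuclideanSpace ℝ (Fin d)) : ℝ :=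
  (inner ℝ (gradient (fun η => p x η) ξ) (gradient (fun y => q y ξ) x) : ℝ) -
    (inner ℝ (gradient (fun y => p y ξ) x) (gradient (fun η => q x η) ξ) : ℝ)

/-- The symbol `f₀(x) = (K ⟨x⟩^{-μ})^{1/2}`. -/
def fzero (μ K : ℝ) (x : EuclideanSpace ℝ (Fin d)) : ℝ := Real.sqrt (K * jap x ^ (-μ))

/-- The symbol `h₁(x,ξ) = |ξ|² + V₁(x)`. -/
def hone (V₁ : EuclideanSpace ℝ (Fin d) → ℝ) (x ξ : EuclideanSpace ℝ (Fin d)) : ℝ :=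
  ‖ξ‖ ^ 2 + V₁ x

/-- The symbol `b(x,ξ) = (ξ·x)/(f₀(x)⟨x⟩)`. -/
def bsym (μ K : ℝ) (x ξ : EuclideanSpace ℝ (Fin d)) : ℝ :=
  (inner ℝ ξ x : ℝ) / (fzero μ K x * jap x)

/-- The virial weight `W(x) = -2V₁(x) - x·∇V₁(x)`. -/
def Wfun (V₁ : EuclideanSpace ℝ (Fin d) → ℝ) (x : EuclideanSpace ℝ (Fin d)) : ℝ :=
  -2 * V₁ x - (inner ℝ (gradient V₁ x) x : ℝ)

/-! Since `f₀(x)⟨x⟩ = √K ⟨x⟩^{1-μ/2}`, the symbol is `b = (ξ·x)⟨x⟩^{μ/2-1}/√K`, whose gradients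
are explicit by `∇⟨x⟩^a = a⟨x⟩^{a-2} x`. Substituting them into the bracket and using
`K⟨x⟩^{-μ} b² = (ξ·x)²⟨x⟩^{-2}` gives the identity. For the bound, the choice of `K` turns the
hypothesis on `W` into `W ≥ (2-μ)K⟨x⟩^{-μ}`, and `⟨x⟩^{-μ/2-1} = ⟨x⟩^{μ/2-1}⟨x⟩^{-μ}`. -/

open Real InnerProductSpace

lemma HasFDerivAt.hasGradientAt_of_apply_eq_inner {F : Type*} [NormedAddCommGroup F]
    [InnerProductSpace ℝ F] [CompleteSpace F] {f : F → ℝ} {L : F →L[ℝ] ℝ} {g x : F}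
    (h : HasFDerivAt f L x) (hL : ∀ v, L v = ⟪g, v⟫_ℝ) : HasGradientAt f g x := by
  rw [hasGradientAt_iff_hasFDerivAt]
  have hg : toDual ℝ F g = L := by
    ext v
    simp only [toDual_apply_apply, hL]
  rwa [hg]

section

variable {μ K : ℝ} {V₁ : EuclideanSpace ℝ (Fin d) → ℝ} (x ξ : EuclideanSpace ℝ (Fin d))

lemma jap_pos : 0 < jap x := sqrt_pos.mpr (by positivity)

lemma jap_rpow (a : ℝ) : jap x ^ a = (‖x‖ ^ 2 + 1) ^ (a / 2) := by
  rw [jap, sqrt_eq_rpow, ← rpow_mul (by positivity)]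
  ring_nf

lemma hasFDerivAt_jap_rpow (a : ℝ) :
    HasFDerivAt (fun y => jap y ^ a) ((a * jap x ^ (a - 2)) • innerSL ℝ x) x := by
  have h := ((hasFDerivAt_id (𝕜 := ℝ) x).norm_sq.add_const 1).rpow_const (p := a / 2)
    (Or.inl (by positivity))
  refine (h.congr_of_eventuallyEq (.of_forall fun y => jap_rpow y a)).congr_fderiv ?_
  rw [jap_rpow, show (a - 2) / 2 = a / 2 - 1 by ring]
  ext v
  simp only [smul_apply, ContinuousLinearMap.comp_apply, innerSL_apply_apply,
    smul_eq_mul, id, ContinuousLinearMap.id_apply]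
  ring

lemma fzero_mul_jap : fzero μ K x * jap x = √K * jap x ^ (1 - μ / 2) := by
  have hJ := jap_pos x
  rw [fzero, sqrt_mul' _ (rpow_nonneg hJ.le _), sqrt_eq_rpow (jap x ^ (-μ)), ← rpow_mul hJ.le,
    mul_assoc, ← rpow_add_one hJ.ne']
  ring_nf

lemma bsym_eq_inner_mul_jap_rpow : bsym μ K x ξ = ⟪ξ, x⟫_ℝ * jap x ^ (μ / 2 - 1) / √K := by
  rw [bsym, fzero_mul_jap, show μ / 2 - 1 = -(1 - μ / 2) by ring, rpow_neg (jap_pos x).le]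
  field_simp

lemma hasGradientAt_hone_momentum : HasGradientAt (fun η => hone V₁ x η) ((2 : ℝ) • ξ) ξ := by
  refine ((hasFDerivAt_id (𝕜 := ℝ) ξ).norm_sq.add_const (V₁ x)).hasGradientAt_of_apply_eq_inner
    fun v => ?_
  simp [real_inner_smul_left]

lemma hasGradientAt_hone_position (hV : DifferentiableAt ℝ V₁ x) :
    HasGradientAt (fun y => hone V₁ y ξ) (gradient V₁ x) x := by
  rw [hasGradientAt_iff_hasFDerivAt] at *
  exact hV.hasGradientAt.const_add _

lemma hasGradientAt_bsym_momentum :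
    HasGradientAt (fun η => bsym μ K x η) ((jap x ^ (μ / 2 - 1) / √K) • x) ξ := by
  convert (((innerSL ℝ x).hasFDerivAt.mul_const (jap x ^ (μ / 2 - 1))).mul_const
    (√K)⁻¹).hasGradientAt_of_apply_eq_inner fun v => ?_ using 1
  · ext η
    rw [bsym_eq_inner_mul_jap_rpow, innerSL_apply_apply, real_inner_comm, div_eq_mul_inv]
  simp only [smul_apply, coe_innerSL_apply, smul_eq_mul, real_inner_smul_left]
  ring

lemma hasGradientAt_bsym_position :
    HasGradientAt (fun y => bsym μ K y ξ)
      ((√K)⁻¹ • (jap x ^ (μ / 2 - 1) • ξ +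
        ((μ / 2 - 1) * ⟪ξ, x⟫_ℝ * jap x ^ (μ / 2 - 3)) • x)) x := by
  have h := (((innerSL ℝ ξ).hasFDerivAt (x := x)).mul
    (hasFDerivAt_jap_rpow x (μ / 2 - 1))).mul_const (√K)⁻¹
  rw [show μ / 2 - 1 - 2 = μ / 2 - 3 by ring] at h
  convert h.hasGradientAt_of_apply_eq_inner fun v => ?_ using 1
  · ext y
    rw [bsym_eq_inner_mul_jap_rpow, div_eq_mul_inv]
    rfl
  simp only [coe_innerSL_apply, smul_add, add_apply, smul_apply, smul_eq_mul, inner_add_left,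
    real_inner_smul_left]
  ring

lemma pb_hone_bsym (hK : 0 < K) (hV : DifferentiableAt ℝ V₁ x) :
    pb (hone V₁) (bsym μ K) x ξ =
      jap x ^ (μ / 2 - 1) *
        (Wfun V₁ x - (2 - μ) * K * jap x ^ (-μ) * bsym μ K x ξ ^ 2 + 2 * hone V₁ x ξ) / √K := by
  have hJ := jap_pos x
  have hJ3 : jap x ^ (μ / 2 - 3) = jap x ^ (μ / 2 - 1) / jap x ^ 2 := by
    rw [show μ / 2 - 3 = μ / 2 - 1 - 2 by ring, rpow_sub hJ, rpow_two]
  have hJμ : jap x ^ (-μ) = ((jap x ^ (μ / 2 - 1)) ^ 2 * jap x ^ 2)⁻¹ := by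
    rw [rpow_neg hJ.le, ← rpow_natCast, ← rpow_natCast, ← rpow_mul hJ.le, ← rpow_add hJ]
    ring_nf
  have hsK : √K ^ 2 = K := sq_sqrt hK.le
  rw [pb, (hasGradientAt_hone_momentum x ξ).gradient,
    (hasGradientAt_hone_position x ξ hV).gradient, (hasGradientAt_bsym_momentum x ξ).gradient,
    (hasGradientAt_bsym_position x ξ).gradient, bsym_eq_inner_mul_jap_rpow, Wfun, hone, hJ3, hJμ]
  simp only [inner_add_right, real_inner_smul_left, real_inner_smul_right,
    real_inner_self_eq_norm_sq]
  field_simp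
  rw [hsK]
  ring

lemma pb_hone_bsym_ge (hK : 0 < K) (hV : DifferentiableAt ℝ V₁ x)
    (hW : (2 - μ) * K * jap x ^ (-μ) ≤ Wfun V₁ x) :
    (2 - μ) * √K * jap x ^ (-μ / 2 - 1) * (1 - bsym μ K x ξ ^ 2) +
        2 * jap x ^ (μ / 2 - 1) * hone V₁ x ξ / √K ≤ pb (hone V₁) (bsym μ K) x ξ := by
  have hJ := jap_pos x
  have hsK_pos : 0 < √K := sqrt_pos.mpr hK
  have hJ1 : jap x ^ (-μ / 2 - 1) = jap x ^ (μ / 2 - 1) * jap x ^ (-μ) := by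
    rw [← rpow_add hJ]
    ring_nf
  have hlhs : (2 - μ) * √K * jap x ^ (-μ / 2 - 1) * (1 - bsym μ K x ξ ^ 2) +
        2 * jap x ^ (μ / 2 - 1) * hone V₁ x ξ / √K =
      jap x ^ (μ / 2 - 1) *
        ((2 - μ) * K * jap x ^ (-μ) * (1 - bsym μ K x ξ ^ 2) + 2 * hone V₁ x ξ) / √K := by
    rw [hJ1]
    field_simp
    rw [sq_sqrt hK.le]
    ring
  rw [hlhs, pb_hone_bsym x ξ hK hV]
  gcongr
  linarith

end

theorem stmt16_general (μ K e₁ et₁ : ℝ) (hμ2 : μ < 2) (hK : 0 < K)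
    (V₁ : EuclideanSpace ℝ (Fin d) → ℝ)
    (hV : ContDiffOn ℝ 1 V₁ {(0 : EuclideanSpace ℝ (Fin d))}ᶜ) :
    (∀ x : EuclideanSpace ℝ (Fin d), x ≠ 0 → ∀ ξ,
      pb (hone V₁) (bsym μ K) x ξ =
        jap x ^ (μ / 2 - 1) *
          (Wfun V₁ x - (2 - μ) * K * jap x ^ (-μ) * bsym μ K x ξ ^ 2 +
            2 * hone V₁ x ξ) / Real.sqrt K) ∧
    ((∀ x : EuclideanSpace ℝ (Fin d), x ≠ 0 →
        e₁ * et₁ * jap x ^ (-μ) ≤ Wfun V₁ x) →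
      K = e₁ * et₁ / (2 - μ) →
      ∀ x : EuclideanSpace ℝ (Fin d), x ≠ 0 → ∀ ξ,
        (2 - μ) * Real.sqrt K * jap x ^ (-μ / 2 - 1) * (1 - bsym μ K x ξ ^ 2) +
            2 * jap x ^ (μ / 2 - 1) * hone V₁ x ξ / Real.sqrt K ≤
          pb (hone V₁) (bsym μ K) x ξ) := by
  have hV' : ∀ x : EuclideanSpace ℝ (Fin d), x ≠ 0 → DifferentiableAt ℝ V₁ x := fun x hx =>
    (hV.contDiffAt (isOpen_compl_singleton.mem_nhds hx)).differentiableAt one_ne_zero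
  refine ⟨fun x hx ξ => pb_hone_bsym x ξ hK (hV' x hx),
    fun hW hKe x hx ξ => pb_hone_bsym_ge x ξ hK (hV' x hx) ?_⟩
  have hKe' : (2 - μ) * K = e₁ * et₁ := by
    rw [hKe]
    field_simp [show 2 - μ ≠ 0 by linarith]
  rw [hKe']
  exact hW x hx

/-- with `f₀ = (K⟨x⟩^{-μ})^{1/2}`, `h₁ = |ξ|² + V₁`,
`b = (ξ·x)/(f₀(x)⟨x⟩)` and `W = -2V₁ - x·∇V₁`, for real `V₁ ∈ C¹(ℝ^d \ {0})` one has
the identity `{h₁, b} = ⟨x⟩^{μ/2-1}(W - (2-μ)K⟨x⟩^{-μ}b² + 2h₁)/√K` away from `0`;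
moreover if in addition `W ≥ ε₁ε̃₁⟨x⟩^{-μ}` and `K = ε₁ε̃₁/(2-μ)` then
`{h₁, b} ≥ (2-μ)√K ⟨x⟩^{-μ/2-1}(1 - b²) + 2⟨x⟩^{μ/2-1} h₁/√K`. -/
theorem stmt16 (μ K e₁ et₁ : ℝ) (hμ0 : 0 < μ) (hμ2 : μ < 2) (hK : 0 < K)
    (he₁ : 0 < e₁) (het₁ : 0 < et₁)
    (V₁ : EuclideanSpace ℝ (Fin d) → ℝ)
    (hV : ContDiffOn ℝ 1 V₁ {(0 : EuclideanSpace ℝ (Fin d))}ᶜ) :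
    (∀ x : EuclideanSpace ℝ (Fin d), x ≠ 0 → ∀ ξ,
      pb (hone V₁) (bsym μ K) x ξ =
        jap x ^ (μ / 2 - 1) *
          (Wfun V₁ x - (2 - μ) * K * jap x ^ (-μ) * bsym μ K x ξ ^ 2 +
            2 * hone V₁ x ξ) / Real.sqrt K) ∧
    ((∀ x : EuclideanSpace ℝ (Fin d), x ≠ 0 →
        e₁ * et₁ * jap x ^ (-μ) ≤ Wfun V₁ x) →
      K = e₁ * et₁ / (2 - μ) →
      ∀ x : EuclideanSpace ℝ (Fin d), x ≠ 0 → ∀ ξ,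
        (2 - μ) * Real.sqrt K * jap x ^ (-μ / 2 - 1) * (1 - bsym μ K x ξ ^ 2) +
            2 * jap x ^ (μ / 2 - 1) * hone V₁ x ξ / Real.sqrt K ≤
          pb (hone V₁) (bsym μ K) x ξ) :=
  stmt16_general μ K e₁ et₁ hμ2 hK V₁ hV
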